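/- In the logic CoPC, for every natural number n ≥ 1 the equivalence ¬^(2n) p ↔ ¬¬p is a theorem: both sequents ⇒ ¬^(2n) p → ¬¬p and ⇒ ¬¬p → ¬^(2n) p are derivable in G3-CoPC. -/
import Mathlib


inductive Fml where
  | var : Nat → Fml
  | top : Fml
  | and : Fml → Fml → Fml
  | or  : Fml → Fml → Fml
  | imp : Fml → Fml → Fml
  | neg : Fml → Fml
deriving DecidableEq

/-- Names for the four possible negation rules. -/
inductive NegRule where
  | n | nef | copc | an
deriving DecidableEq

/-- `Der R Γ φ k`: the sequent `Γ ⇒ φ` is derivable with height at most `k`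
in the G3 calculus whose negation rules are those satisfying `R`.
Axioms are available at every height; each rule adds one to the height. -/
inductive Der (R : NegRule → Prop) : Multiset Fml → Fml → Nat → Prop where
  | ax (Γ : Multiset Fml) (p k) : Der R (Fml.var p ::ₘ Γ) (Fml.var p) k
  | top (Γ : Multiset Fml) (k) : Der R Γ Fml.top k
  | andR {Γ α β k} : Der R Γ α k → Der R Γ β k → Der R Γ (Fml.and α β) (k+1)
  | andL {Γ α β φ k} : Der R (α ::ₘ β ::ₘ Γ) φ k → Der R (Fml.and α β ::ₘ Γ) φ (k+1)
  | orR1 {Γ α β k} : Der R Γ α k → Der R Γ (Fml.or α β) (k+1)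
  | orR2 {Γ α β k} : Der R Γ β k → Der R Γ (Fml.or α β) (k+1)
  | orL {Γ α β φ k} : Der R (α ::ₘ Γ) φ k → Der R (β ::ₘ Γ) φ k →
      Der R (Fml.or α β ::ₘ Γ) φ (k+1)
  | impR {Γ α β k} : Der R (α ::ₘ Γ) β k → Der R Γ (Fml.imp α β) (k+1)
  | impL {Γ α β φ k} : Der R (Fml.imp α β ::ₘ Γ) α k → Der R (β ::ₘ Γ) φ k →
      Der R (Fml.imp α β ::ₘ Γ) φ (k+1)
  | nrule {Γ α β k} : R NegRule.n → Der R (β ::ₘ Fml.neg α ::ₘ Γ) α k →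
      Der R (α ::ₘ Fml.neg α ::ₘ Γ) β k → Der R (Fml.neg α ::ₘ Γ) (Fml.neg β) (k+1)
  | nef {Γ α β k} : R NegRule.nef → Der R (Fml.neg α ::ₘ Γ) α k →
      Der R (Fml.neg α ::ₘ Γ) (Fml.neg β) (k+1)
  | copc {Γ α β k} : R NegRule.copc → Der R (β ::ₘ Fml.neg α ::ₘ Γ) α k →
      Der R (Fml.neg α ::ₘ Γ) (Fml.neg β) (k+1)
  | an {Γ α k} : R NegRule.an → Der R (α ::ₘ Γ) (Fml.neg α) k → Der R Γ (Fml.neg α) (k+1)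

/-- The calculus G3-N. -/
def NCalc : NegRule → Prop := fun r => r = NegRule.n
/-- The calculus G3-NeF. -/
def NeFCalc : NegRule → Prop := fun r => r = NegRule.nef
/-- The calculus G3-CoPC. -/
def CoPCCalc : NegRule → Prop := fun r => r = NegRule.copc
/-- The calculus G3-MPC (contraposition plus (AN)). -/
def MPCCalc : NegRule → Prop := fun r => r = NegRule.copc ∨ r = NegRule.an

/-- Derivability (at some height). -/
def Derivable (R : NegRule → Prop) (Γ : Multiset Fml) (φ : Fml) : Prop := ∃ k, Der R Γ φ k

/-- `iterNeg m φ` is `m` nested applications of `¬` to `φ`. -/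
def iterNeg : Nat → Fml → Fml
  | 0, φ => φ
  | m + 1, φ => Fml.neg (iterNeg m φ)

namespace CoPCHelper

lemma hc : CoPCCalc NegRule.copc := rfl

/-- abbreviation for iterated negations of a variable -/
def I (p m : Nat) : Fml := iterNeg m (Fml.var p)

lemma I_succ (p m : Nat) : I p (m+1) = Fml.neg (I p m) := rfl

lemma castDer {R Γ Γ' φ k} (e : Γ = Γ') (h : Der R Γ φ k) : Der R Γ' φ k := e ▸ h

/-- generalized axiom for iterated negations -/
lemma iterAx (p : Nat) : ∀ m (Γ : Multiset Fml),
    Derivable CoPCCalc (I p m ::ₘ Γ) (I p m)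
  | 0, Γ => ⟨0, Der.ax Γ p 0⟩
  | m+1, Γ => by
      obtain ⟨k, h⟩ := iterAx p m (Fml.neg (I p m) ::ₘ Γ)
      exact ⟨k+1, Der.copc hc h⟩

lemma K (p : Nat) : ∀ m (Γ : Multiset Fml),
    Derivable CoPCCalc (I p (2*m) ::ₘ I p 1 ::ₘ Γ) (I p (2*m+1))
  | 0, Γ => by
      obtain ⟨k, h⟩ := iterAx p 1 (I p 0 ::ₘ Γ)
      exact ⟨k, castDer (Multiset.cons_swap _ _ _) h⟩
  | m+1, Γ => by
      obtain ⟨k, h⟩ := K p m (I p (2*m+2) ::ₘ I p (2*m+2) ::ₘ Γ)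
      have e : I p (2*m) ::ₘ I p 1 ::ₘ I p (2*m+2) ::ₘ I p (2*m+2) ::ₘ Γ
          = I p (2*m) ::ₘ I p (2*m+2) ::ₘ I p (2*m+2) ::ₘ I p 1 ::ₘ Γ := by
        rw [Multiset.cons_swap (I p 1) (I p (2*m+2)),
            Multiset.cons_swap (I p 1) (I p (2*m+2))]
      have h1 : Der CoPCCalc
          (I p (2*m+2) ::ₘ I p (2*m+2) ::ₘ I p 1 ::ₘ Γ) (I p (2*m+1)) (k+1) :=
        Der.copc hc (castDer e h)
      have h2 : Der CoPCCalc (I p (2*m+2) ::ₘ I p 1 ::ₘ Γ) (I p (2*m+3)) (k+2) :=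
        Der.copc hc h1
      have e2 : 2*(m+1) = 2*m+2 := by ring
      exact ⟨k+2, by rw [e2]; exact h2⟩

lemma J (p : Nat) : ∀ m (Γ : Multiset Fml),
    Derivable CoPCCalc (I p (2*m+1) ::ₘ I p 2 ::ₘ Γ) (I p 1)
  | 0, Γ => iterAx p 1 (I p 2 ::ₘ Γ)
  | m+1, Γ => by
      obtain ⟨k, h⟩ := J p m (I p 0 ::ₘ I p (2*m+3) ::ₘ Γ)
      have h1 : Der CoPCCalc (I p 2 ::ₘ I p 0 ::ₘ I p (2*m+3) ::ₘ Γ)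
          (I p (2*m+2)) (k+1) := Der.copc hc h
      have e : I p 2 ::ₘ I p 0 ::ₘ I p (2*m+3) ::ₘ Γ
          = I p 0 ::ₘ I p (2*m+3) ::ₘ I p 2 ::ₘ Γ := by
        rw [Multiset.cons_swap (I p 2) (I p 0),
            Multiset.cons_swap (I p 2) (I p (2*m+3))]
      have h2 : Der CoPCCalc (I p (2*m+3) ::ₘ I p 2 ::ₘ Γ) (I p 1) (k+2) :=
        Der.copc hc (castDer e h1)
      have e2 : 2*(m+1)+1 = 2*m+3 := by ring
      exact ⟨k+2, by rw [e2]; exact h2⟩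

lemma dir1 (p m : Nat) (Γ : Multiset Fml) :
    Derivable CoPCCalc (I p (2*m+2) ::ₘ Γ) (I p 2) := by
  obtain ⟨k, h⟩ := K p m (I p (2*m+2) ::ₘ Γ)
  have e : I p (2*m) ::ₘ I p 1 ::ₘ I p (2*m+2) ::ₘ Γ
      = I p (2*m) ::ₘ I p (2*m+2) ::ₘ I p 1 ::ₘ Γ := by
    rw [Multiset.cons_swap (I p 1) (I p (2*m+2))]
  have h1 : Der CoPCCalc (I p (2*m+2) ::ₘ I p 1 ::ₘ Γ) (I p (2*m+1)) (k+1) :=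
    Der.copc hc (castDer e h)
  have e2 : I p (2*m+2) ::ₘ I p 1 ::ₘ Γ = I p 1 ::ₘ I p (2*m+2) ::ₘ Γ :=
    Multiset.cons_swap _ _ _
  exact ⟨k+2, Der.copc hc (castDer e2 h1)⟩

lemma dir2 (p m : Nat) (Γ : Multiset Fml) :
    Derivable CoPCCalc (I p 2 ::ₘ Γ) (I p (2*m+2)) := by
  obtain ⟨k, h⟩ := J p m Γ
  exact ⟨k+1, Der.copc hc h⟩

end CoPCHelper

/-- In CoPC, `¬^(2n) p ↔ ¬¬p` is a theorem for every `n ≥ 1`: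
both implications are derivable. -/
theorem even_negations_collapse_CoPC :
    ∀ n : Nat, 1 ≤ n → ∀ p : Nat,
      Derivable CoPCCalc 0
        (Fml.imp (iterNeg (2 * n) (Fml.var p)) (Fml.neg (Fml.neg (Fml.var p)))) ∧
      Derivable CoPCCalc 0
        (Fml.imp (Fml.neg (Fml.neg (Fml.var p))) (iterNeg (2 * n) (Fml.var p))) := by
  intro n hn p
  obtain ⟨m, rfl⟩ := Nat.exists_eq_add_of_le hn
  have e : 2 * (1 + m) = 2 * m + 2 := by ring
  rw [e]
  constructor
  · obtain ⟨k, h⟩ := CoPCHelper.dir1 p m 0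
    exact ⟨k+1, Der.impR h⟩
  · obtain ⟨k, h⟩ := CoPCHelper.dir2 p m 0
    exact ⟨k+1, Der.impR h⟩
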